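/- Let G be a standard Gaussian N(0,1) random variable and let X be a real random variable independent of G with E[X] = 0 and E[|X|³] < ∞. Then for every u ≠ 0 and ε > 0, | (2√(2π) e^{u²/2}/u) · ( ℙ(G + εX ≥ u) − Ψ(u) ) − ε² E[X²] | ≤ ε³ E[|X|³] e^{u²/2}/(3|u|). In particular, the quantity ε_u := (2√(2π) e^{u²/2}/u)(C₂*(f,u) − Ψ(u)), with C₂*(f,u) = ℙ(G + εX ≥ u), has the same order of magnitude as ε² E[X²]. -/

import Mathlib

open MeasureTheory ProbabilityTheory

/-- The standard Gaussian tail function `Ψ(x) = (2π)^{-1/2} ∫_x^∞ e^{-t²/2} dt`. -/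
noncomputable def Psi (x : ℝ) : ℝ :=
  ∫ t in Set.Ioi x, (Real.sqrt (2 * Real.pi))⁻¹ * Real.exp (-t ^ 2 / 2)

/-!
By independence, `ℙ(G + εX ≥ u) = E[Ψ(u - εX)]`. The derivatives of `Ψ` are `-φ`, `t φ(t)` and
`(1 - t²) φ(t)`, the last one bounded by `φ(0) = 1/√(2π)`, so the second-order Taylor expansion of
`Ψ` at `u` has remainder at most `|s|³ / (6√(2π))`. Averaging it over `s = -εX`, the linear term
vanishes because `E[X] = 0`, and the quadratic term `ε² E[X²] u φ(u) / 2` is exactly `ε² E[X²]`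
after multiplication by the prefactor `2√(2π) e^{u²/2} / u = 2 / (u φ(u))`.
-/

open Real Set

section TaylorBound

variable {g g' : ℝ → ℝ} {C : ℝ} {n : ℕ}

lemma abs_le_of_abs_deriv_le_pow_of_nonneg (hg : ∀ t, HasDerivAt g (g' t) t) (h0 : g 0 = 0)
    (hbound : ∀ t, |g' t| ≤ C * |t| ^ n) {s : ℝ} (hs : 0 ≤ s) :
    |g s| ≤ C * |s| ^ (n + 1) / (n + 1) := by
  have hB (t : ℝ) : HasDerivAt (fun t => C * t ^ (n + 1) / (n + 1)) (C * t ^ n) t :=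
    (((hasDerivAt_pow (n + 1) t).const_mul C).div_const ((n : ℝ) + 1)).congr_deriv (by
      push_cast
      field_simp)
  rw [abs_of_nonneg hs]
  exact image_norm_le_of_norm_deriv_right_le_deriv_boundary
    (fun t _ => (hg t).continuousAt.continuousWithinAt) (fun t _ => (hg t).hasDerivWithinAt)
    (by simp [h0]) hB (fun t ht => by simpa [abs_of_nonneg ht.1] using hbound t) ⟨hs, le_rfl⟩

lemma abs_le_of_abs_deriv_le_pow (hg : ∀ t, HasDerivAt g (g' t) t) (h0 : g 0 = 0)
    (hbound : ∀ t, |g' t| ≤ C * |t| ^ n) (s : ℝ) :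
    |g s| ≤ C * |s| ^ (n + 1) / (n + 1) := by
  rcases le_total 0 s with hs | hs
  · exact abs_le_of_abs_deriv_le_pow_of_nonneg hg h0 hbound hs
  · have hneg (t : ℝ) : HasDerivAt (fun t => g (-t)) (-g' (-t)) t :=
      ((hg (-t)).comp t (hasDerivAt_neg t)).congr_deriv (by ring)
    simpa using abs_le_of_abs_deriv_le_pow_of_nonneg hneg (by simpa using h0)
      (fun t => by simpa using hbound (-t)) (neg_nonneg.2 hs)

theorem abs_sub_taylor_two_le {f f' f'' f''' : ℝ → ℝ} (hf : ∀ t, HasDerivAt f (f' t) t)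
    (hf' : ∀ t, HasDerivAt f' (f'' t) t) (hf'' : ∀ t, HasDerivAt f'' (f''' t) t)
    (hC : ∀ t, |f''' t| ≤ C) (x s : ℝ) :
    |f (x + s) - f x - s * f' x - s ^ 2 / 2 * f'' x| ≤ C * |s| ^ 3 / 6 := by
  have h2 (t : ℝ) : |f'' (x + t) - f'' x| ≤ C * |t| := by
    simpa using abs_le_of_abs_deriv_le_pow (n := 0) (g := fun t => f'' (x + t) - f'' x)
      (fun t => ((hf'' (x + t)).comp_const_add x t).sub_const _) (by simp)
      (fun t => by simpa using hC (x + t)) t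
  have h1 (t : ℝ) : |f' (x + t) - f' x - t * f'' x| ≤ C * |t| ^ 2 / 2 := by
    have hd (t : ℝ) : HasDerivAt (fun t => f' (x + t) - f' x - t * f'' x)
        (f'' (x + t) - f'' x) t :=
      (((hf' (x + t)).comp_const_add x t).sub_const _).sub (hasDerivAt_mul_const _)
    have := abs_le_of_abs_deriv_le_pow (n := 1) hd (by simp) (by simpa using h2) t
    norm_num at this
    rwa [sq_abs]
  have hd (t : ℝ) : HasDerivAt (fun t => f (x + t) - f x - t * f' x - t ^ 2 / 2 * f'' x)
      (f' (x + t) - f' x - t * f'' x) t :=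
    ((((hf (x + t)).comp_const_add x t).sub_const _).sub (hasDerivAt_mul_const _)).sub
      (((hasDerivAt_pow 2 t).div_const 2).mul_const (f'' x)) |>.congr_deriv (by ring)
  have := abs_le_of_abs_deriv_le_pow (n := 2) (C := C / 2) hd (by simp)
    (fun t => by simpa [mul_div_right_comm] using h1 t) s
  convert this using 1
  norm_num
  ring

end TaylorBound

lemma hasDerivAt_setIntegral_Ioi {E : Type*} [NormedAddCommGroup E] [NormedSpace ℝ E]
    [CompleteSpace E] {f : ℝ → E} (hfi : Integrable f) (hfc : Continuous f) (x : ℝ) :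
    HasDerivAt (fun x => ∫ t in Ioi x, f t) (-f x) x := by
  have hsplit : (fun x => ∫ t in Ioi x, f t) = fun x => (∫ t in Ioi 0, f t) - ∫ t in 0..x, f t := by
    ext x
    rw [← intervalIntegral.integral_Ioi_sub_Ioi' hfi.integrableOn hfi.integrableOn, sub_sub_cancel]
  rw [hsplit]
  exact (intervalIntegral.integral_hasDerivAt_right (hfc.intervalIntegrable 0 x)
    hfc.aestronglyMeasurable.stronglyMeasurableAtFilter hfc.continuousAt).const_sub _

lemma abs_one_sub_sq_mul_exp_le_one (x : ℝ) : |(1 - x ^ 2) * exp (-x ^ 2 / 2)| ≤ 1 := by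
  have hy : 0 ≤ x ^ 2 / 2 := by positivity
  have hlin := add_one_le_exp (x ^ 2 / 2)
  have hquad := quadratic_le_exp_of_nonneg hy
  have h : |1 - x ^ 2| ≤ exp (x ^ 2 / 2) := abs_le.2 ⟨by nlinarith, by nlinarith⟩
  calc |(1 - x ^ 2) * exp (-x ^ 2 / 2)| = |1 - x ^ 2| * exp (-(x ^ 2 / 2)) := by
        rw [abs_mul, abs_of_pos (exp_pos _), neg_div]
    _ ≤ exp (x ^ 2 / 2) * exp (-(x ^ 2 / 2)) := by gcongr
    _ = 1 := by rw [← exp_add, add_neg_cancel, exp_zero]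

local notation "φ" => gaussianPDFReal 0 1

lemma gaussianPDFReal_zero_one (t : ℝ) : φ t = (√(2 * π))⁻¹ * exp (-t ^ 2 / 2) := by
  simp [gaussianPDFReal]

lemma hasDerivAt_gaussianPDFReal_zero_one (t : ℝ) : HasDerivAt φ (-t * φ t) t := by
  have hexponent : HasDerivAt (fun t : ℝ => -t ^ 2 / 2) (-t) t :=
    ((hasDerivAt_pow 2 t).neg.div_const 2).congr_deriv (by ring)
  rw [funext gaussianPDFReal_zero_one]
  exact (hexponent.exp.const_mul _).congr_deriv (by ring)

lemma continuous_gaussianPDFReal_zero_one : Continuous φ :=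
  continuous_iff_continuousAt.2 fun t => (hasDerivAt_gaussianPDFReal_zero_one t).continuousAt

lemma Psi_eq_setIntegral (x : ℝ) : Psi x = ∫ t in Ioi x, φ t := by
  simp_rw [Psi, gaussianPDFReal_zero_one]

lemma hasDerivAt_Psi (x : ℝ) : HasDerivAt Psi (-φ x) x := by
  rw [funext Psi_eq_setIntegral]
  exact hasDerivAt_setIntegral_Ioi (integrable_gaussianPDFReal 0 1)
    continuous_gaussianPDFReal_zero_one x

lemma hasDerivAt_neg_gaussianPDFReal_zero_one (x : ℝ) :
    HasDerivAt (fun x => -φ x) (x * φ x) x :=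
  (hasDerivAt_gaussianPDFReal_zero_one x).neg.congr_deriv (by ring)

lemma hasDerivAt_mul_gaussianPDFReal_zero_one (x : ℝ) :
    HasDerivAt (fun x => x * φ x) ((1 - x ^ 2) * φ x) x :=
  ((hasDerivAt_id' x).mul (hasDerivAt_gaussianPDFReal_zero_one x)).congr_deriv (by ring)

lemma abs_one_sub_sq_mul_gaussianPDFReal_le (x : ℝ) : |(1 - x ^ 2) * φ x| ≤ (√(2 * π))⁻¹ := by
  have := abs_one_sub_sq_mul_exp_le_one x
  rw [gaussianPDFReal_zero_one, mul_left_comm, abs_mul, abs_of_pos (by positivity)]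
  exact mul_le_of_le_one_right (by positivity) this

lemma sqrt_two_pi_mul_exp_mul_gaussianPDFReal (x : ℝ) : √(2 * π) * exp (x ^ 2 / 2) * φ x = 1 := by
  rw [gaussianPDFReal_zero_one, neg_div, exp_neg]
  field_simp

lemma continuous_Psi : Continuous Psi :=
  continuous_iff_continuousAt.2 fun x => (hasDerivAt_Psi x).continuousAt

lemma Psi_nonneg (x : ℝ) : 0 ≤ Psi x := by
  rw [Psi_eq_setIntegral]
  exact setIntegral_nonneg measurableSet_Ioi fun t _ => gaussianPDFReal_nonneg 0 1 t

lemma gaussianReal_real_Ici (x : ℝ) : (gaussianReal 0 1).real (Ici x) = Psi x := by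
  rw [measureReal_def, gaussianReal_apply_eq_integral 0 one_ne_zero, integral_Ici_eq_integral_Ioi,
    ← Psi_eq_setIntegral, ENNReal.toReal_ofReal (Psi_nonneg x)]

lemma Psi_le_one (x : ℝ) : Psi x ≤ 1 :=
  gaussianReal_real_Ici x ▸ measureReal_le_one

lemma abs_Psi_add_sub_taylor_le (x s : ℝ) :
    |Psi (x + s) - Psi x + s * φ x - s ^ 2 / 2 * (x * φ x)| ≤ (√(2 * π))⁻¹ * |s| ^ 3 / 6 := by
  have := abs_sub_taylor_two_le hasDerivAt_Psi hasDerivAt_neg_gaussianPDFReal_zero_one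
    hasDerivAt_mul_gaussianPDFReal_zero_one abs_one_sub_sq_mul_gaussianPDFReal_le x s
  rwa [mul_neg, sub_neg_eq_add] at this

section Probability

variable {Ω : Type*} [MeasurableSpace Ω] {P : Measure Ω} [IsProbabilityMeasure P]

lemma integrable_Psi_comp {Y : Ω → ℝ} (hY : AEMeasurable Y P) :
    Integrable (fun ω => Psi (Y ω)) P :=
  .of_bound (continuous_Psi.measurable.comp_aemeasurable hY).aestronglyMeasurable 1
    (ae_of_all _ fun ω => by simpa [abs_of_nonneg (Psi_nonneg _)] using Psi_le_one (Y ω))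

lemma measureReal_le_eq_integral_Psi {Y G : Ω → ℝ} (hY : Measurable Y) (hG : Measurable G)
    (hG_law : P.map G = gaussianReal 0 1) (hindep : IndepFun Y G P) :
    P.real {ω | Y ω ≤ G ω} = ∫ ω, Psi (Y ω) ∂P := by
  have hS : MeasurableSet {p : ℝ × ℝ | p.1 ≤ p.2} := measurableSet_le measurable_fst measurable_snd
  have hmap : P.map (fun ω => (Y ω, G ω)) = (P.map Y).prod (gaussianReal 0 1) := by
    rw [← hG_law]
    exact (indepFun_iff_map_prod_eq_prod_map_map hY.aemeasurable hG.aemeasurable).1 hindep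
  calc P.real {ω | Y ω ≤ G ω} = ((P.map Y).prod (gaussianReal 0 1)).real {p | p.1 ≤ p.2} := by
        rw [← hmap, map_measureReal_apply (hY.prodMk hG) hS]
        rfl
    _ = ∫ y, (gaussianReal 0 1).real (Ici y) ∂P.map Y := by
        rw [measureReal_def, Measure.prod_apply hS, ← integral_toReal]
        · rfl
        · exact (measurable_measure_prodMk_left hS).aemeasurable
        · exact ae_of_all _ fun y => measure_lt_top _ _
    _ = ∫ ω, Psi (Y ω) ∂P := by
        simp_rw [gaussianReal_real_Ici]
        exact integral_map hY.aemeasurable continuous_Psi.aestronglyMeasurable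

lemma abs_integral_sub_quadratic_le {F Y : Ω → ℝ} {c a b K : ℝ} (hF : Integrable F P)
    (hY : AEStronglyMeasurable Y P) (hY3 : Integrable (fun ω => |Y ω| ^ 3) P)
    (h : ∀ ω, |F ω - c - a * Y ω - b * Y ω ^ 2| ≤ K * |Y ω| ^ 3) :
    |(∫ ω, F ω ∂P) - c - a * ∫ ω, Y ω ∂P - b * ∫ ω, Y ω ^ 2 ∂P| ≤ K * ∫ ω, |Y ω| ^ 3 ∂P := by
  have hY3' : Integrable (fun ω => ‖Y ω‖ ^ 3) P := by simpa using hY3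
  have hY1 : Integrable Y P := (integrable_norm_iff hY).1 <| by
    simpa using integrable_norm_pow_of_le hY (p := 1) (by norm_num) hY3'
  have hY2 : Integrable (fun ω => Y ω ^ 2) P := by
    simpa using integrable_norm_pow_of_le hY (p := 2) (by norm_num) hY3'
  have hint : ∫ ω, (F ω - c - a * Y ω - b * Y ω ^ 2) ∂P
      = (∫ ω, F ω ∂P) - c - a * ∫ ω, Y ω ∂P - b * ∫ ω, Y ω ^ 2 ∂P := by
    have hFc : Integrable (fun ω => F ω - c) P := hF.sub (integrable_const c)
    have hFcY : Integrable (fun ω => F ω - c - a * Y ω) P := hFc.sub (hY1.const_mul a)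
    rw [integral_sub hFcY (hY2.const_mul b), integral_sub hFc (hY1.const_mul a),
      integral_sub hF (integrable_const c), integral_const, integral_const_mul, integral_const_mul,
      probReal_univ, one_smul]
  rw [← hint, ← integral_const_mul]
  exact norm_integral_le_of_norm_le (hY3.const_mul K)
    (ae_of_all _ fun ω => (norm_eq_abs _).trans_le (h ω))

end Probability

/-- The perturbation quantity `ε_u = (2√(2π) e^{u²/2}/u)(ℙ(G + εX ≥ u) − Ψ(u))`
equals `ε² E[X²]` up to a cubic error. -/
theorem perturbation_quantity_expansion
    {Ω : Type*} [MeasurableSpace Ω] (P : Measure Ω) [IsProbabilityMeasure P]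
    (G : Ω → ℝ) (hG_meas : Measurable G)
    (hG_law : Measure.map G P = gaussianReal 0 1)
    (X : Ω → ℝ) (hX_meas : Measurable X)
    (hindep : IndepFun X G P)
    (hX_mean : ∫ ω, X ω ∂P = 0)
    (hX3 : Integrable (fun ω => |X ω| ^ 3) P)
    (u : ℝ) (hu : u ≠ 0) (ε : ℝ) (hε : 0 < ε) :
    |(2 * Real.sqrt (2 * Real.pi) * Real.exp (u ^ 2 / 2) / u) *
        ((P {ω | u ≤ G ω + ε * X ω}).toReal - Psi u)
        - ε ^ 2 * (∫ ω, (X ω) ^ 2 ∂P)|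
      ≤ ε ^ 3 * (∫ ω, |X ω| ^ 3 ∂P) * Real.exp (u ^ 2 / 2) / (3 * |u|) := by
  have hprob : (P {ω | u ≤ G ω + ε * X ω}).toReal = ∫ ω, Psi (u - ε * X ω) ∂P := by
    have hindep' : IndepFun (fun ω => u - ε * X ω) G P :=
      hindep.comp (by fun_prop : Measurable fun x => u - ε * x) measurable_id
    rw [← measureReal_le_eq_integral_Psi (by fun_prop) hG_meas hG_law hindep']
    simp_rw [sub_le_iff_le_add]
    rfl
  have htaylor (ω : Ω) : |Psi (u - ε * X ω) - Psi u - ε * φ u * X ω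
      - ε ^ 2 * (u * φ u) / 2 * X ω ^ 2| ≤ ε ^ 3 * (√(2 * π))⁻¹ / 6 * |X ω| ^ 3 := by
    have := abs_Psi_add_sub_taylor_le u (-(ε * X ω))
    rw [← sub_eq_add_neg, abs_neg, abs_mul, abs_of_pos hε] at this
    convert this using 2 <;> ring
  have hexp := abs_integral_sub_quadratic_le (integrable_Psi_comp (by fun_prop))
    hX_meas.aestronglyMeasurable hX3 htaylor
  rw [hX_mean, mul_zero, sub_zero, ← hprob] at hexp
  have hA : 2 * √(2 * π) * exp (u ^ 2 / 2) / u * (ε ^ 2 * (u * φ u) / 2) = ε ^ 2 := by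
    have := sqrt_two_pi_mul_exp_mul_gaussianPDFReal u
    rw [div_mul_eq_mul_div, div_eq_iff hu]
    linear_combination ε ^ 2 * u * this
  calc _ = |2 * √(2 * π) * exp (u ^ 2 / 2) / u| * |(P {ω | u ≤ G ω + ε * X ω}).toReal - Psi u
        - ε ^ 2 * (u * φ u) / 2 * ∫ ω, X ω ^ 2 ∂P| := by
        rw [← abs_mul]
        congr 1
        linear_combination (∫ ω, X ω ^ 2 ∂P) * hA
    _ ≤ |2 * √(2 * π) * exp (u ^ 2 / 2) / u| * (ε ^ 3 * (√(2 * π))⁻¹ / 6 * ∫ ω, |X ω| ^ 3 ∂P) := by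
        gcongr
    _ = _ := by
        rw [abs_div, abs_of_pos (by positivity)]
        field_simp
        ring_nf
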